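/- arXiv:1509.01790 — 3 statements merged into one kernel-verified Lean document; each statement's English description precedes it below -/
import Mathlib

section
/- Let M be a nonempty compact Hausdorff topological space and let E be a convex cone of continuous real-valued functions on M (stable under addition and under multiplication by nonnegative reals) that contains all constant functions and separates the points of M. Let X ⊆ M be a compact subset such that every function of E attains its maximum over M at some point of X. Let u : X → ℝ be a bounded lower semicontinuous function, and for z ∈ M set û(z) := sup{v(z) : v ∈ E and v(x) ≤ u(x) for all x ∈ X}. Then for every z ∈ M the set of Jensen measures for z with respect to E supported on X is nonempty, and û(z) = inf{∫ u dμ : μ a Jensen measure for z with respect to E supported on X}. -/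
/-!
Fix `z` and put `s = û(z)`. For `f ∈ C(M)` let `P f` be the infimum of `t * s - v z + c` over
`v ∈ E`, `t ≥ 0` and `c` with `f + v ≤ c + t * u` on `X`. The maximum principle on `X` and the
definition of `û` make `P` finite, and it is sublinear, so by Hahn–Banach some linear `L ≤ P`.
Testing `P` on suitable triples shows `L f ≤ sup_X f`, `v z ≤ L v` on `E` and `L g ≤ s` for every
continuous `g ≤ u` on `X`; hence the Riesz measure `μ` of `L` is a Jensen measure for `z` carried
by `X`. Extended by its upper bound off `X`, `u` becomes lower semicontinuous on `M`, so
`∫ u dμ` is approximated from below by integrals of continuous minorants (level sets of `u` are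
open, and `μ` is inner regular on them), giving `∫ u dμ ≤ s`. Conversely `v z ≤ ∫ v dν ≤ ∫ u dν`
for every Jensen measure `ν` and every admissible `v`.
-/

open MeasureTheory Finset
open scoped Pointwise

theorem sum_range_min_max_sub_eq {ε t : ℝ} (hε : 0 < ε) {n : ℕ} (ht0 : 0 ≤ t)
    (htn : t ≤ n * ε) : ∑ j ∈ range n, min (max (t - j * ε) 0) ε = t := by
  induction n generalizing t with
  | zero =>
    simp only [CharP.cast_eq_zero, zero_mul] at htn
    simp [le_antisymm htn ht0]
  | succ m ih =>
    rw [sum_range_succ]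
    rcases le_or_gt t (m * ε) with h | h
    · rw [ih ht0 h, max_eq_right (by linarith), min_eq_left hε.le, add_zero]
    · have hfull : ∀ j ∈ range m, min (max (t - j * ε) 0) ε = ε := fun j hj => by
        have : (j : ℝ) + 1 ≤ m := by exact_mod_cast mem_range.mp hj
        rw [max_eq_left (by nlinarith), min_eq_right (by nlinarith)]
      push_cast at htn
      rw [sum_congr rfl hfull, sum_const, card_range, nsmul_eq_mul, max_eq_left (by linarith),
        min_eq_left (by linarith)]
      ring

theorem sum_range_ite_lt_le {ε t : ℝ} (hε : 0 < ε) {n : ℕ} (ht0 : 0 ≤ t) (htn : t ≤ n * ε) :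
    ∑ j ∈ range n, (if (j + 1) * ε < t then ε else 0) ≤ t := by
  conv_rhs => rw [← sum_range_min_max_sub_eq hε ht0 htn]
  refine sum_le_sum fun j _ => ?_
  split_ifs with h
  · rw [max_eq_left (by linarith), min_eq_right (by linarith)]
  · exact le_min (le_max_right _ _) hε.le

theorem le_add_sum_range_ite_lt {ε t : ℝ} (hε : 0 < ε) {n : ℕ} (ht0 : 0 ≤ t) (htn : t ≤ n * ε) :
    t ≤ ε + ∑ j ∈ range n, (if (j + 1) * ε < t then ε else 0) := by
  have hstep : ∀ j : ℕ, min (max (t - j * ε) 0) ε ≤ if (j : ℝ) * ε < t then ε else 0 := by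
    intro j
    split_ifs with h
    · exact min_le_right _ _
    · rw [max_eq_right (by linarith), min_eq_left hε.le]
  calc t = ∑ j ∈ range n, min (max (t - j * ε) 0) ε := (sum_range_min_max_sub_eq hε ht0 htn).symm
    _ ≤ ∑ j ∈ range n, if (j : ℝ) * ε < t then ε else 0 := sum_le_sum fun j _ => hstep j
    _ ≤ ∑ j ∈ range (n + 1), if (j : ℝ) * ε < t then ε else 0 :=
        sum_le_sum_of_subset_of_nonneg (range_subset_range.mpr n.le_succ)
          fun j _ _ => by split_ifs <;> linarith
    _ ≤ ε + ∑ j ∈ range n, (if (j + 1) * ε < t then ε else 0) := by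
        rw [sum_range_succ', add_comm]
        push_cast
        gcongr
        split_ifs <;> linarith

section Approximation

variable {T : Type*} [TopologicalSpace T] [MeasurableSpace T] {μ : Measure T} [IsFiniteMeasure μ]

theorem LowerSemicontinuous.integrable_of_abs_le [OpensMeasurableSpace T] {u : T → ℝ}
    (hu : LowerSemicontinuous u) {C : ℝ} (hC : ∀ x, |u x| ≤ C) : Integrable u μ :=
  (integrable_const C).mono' hu.measurable.aestronglyMeasurable (ae_of_all _ hC)

theorem ContinuousMap.integrable_of_compactSpace [CompactSpace T] [OpensMeasurableSpace T]
    (f : C(T, ℝ)) : Integrable f μ :=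
  f.continuous.integrable_of_hasCompactSupport (.of_compactSpace f)

theorem IsOpen.exists_continuous_le_indicator_measureReal_le [CompactSpace T] [T2Space T]
    [BorelSpace T] [μ.InnerRegularCompactLTTop] {U : Set T} (hU : IsOpen U) {δ : ℝ} (hδ : 0 < δ) :
    ∃ h : C(T, ℝ), ⇑h ≤ U.indicator 1 ∧ μ.real U ≤ ∫ x, h x ∂μ + δ := by
  obtain ⟨K, hKU, hK, hμK⟩ := hU.measurableSet.exists_isCompact_lt_add (measure_ne_top μ U)
    (ENNReal.ofReal_pos.mpr hδ).ne'
  obtain ⟨h, h0, h1, h01⟩ := exists_continuous_zero_one_of_isClosed hU.isClosed_compl hK.isClosed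
    (Set.disjoint_compl_left_iff_subset.mpr hKU)
  refine ⟨h, fun x => ?_, ?_⟩
  · by_cases hx : x ∈ U
    · simpa [hx] using (h01 x).2
    · simpa [hx] using (h0 hx).le
  have hKh : μ.real K ≤ ∫ x, h x ∂μ := by
    rw [← integral_indicator_one hK.measurableSet]
    refine integral_mono ((integrable_const 1).indicator hK.measurableSet)
      h.integrable_of_compactSpace fun x => ?_
    by_cases hx : x ∈ K
    · simp [hx, h1 hx]
    · simpa [hx] using (h01 x).1
  have hUK : μ.real U ≤ μ.real K + δ := by
    have := ENNReal.toReal_mono (by finiteness) hμK.le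
    rwa [ENNReal.toReal_add (measure_ne_top μ K) ENNReal.ofReal_ne_top,
      ENNReal.toReal_ofReal hδ.le] at this
  linarith

theorem LowerSemicontinuous.exists_continuous_le_integral_le_of_nonneg [CompactSpace T]
    [T2Space T] [BorelSpace T] [μ.InnerRegularCompactLTTop] {φ : T → ℝ}
    (hφ : LowerSemicontinuous φ) {ε : ℝ} (hε : 0 < ε) {n : ℕ} (h0 : ∀ x, 0 ≤ φ x)
    (hn : ∀ x, φ x ≤ n * ε) :
    ∃ g : C(T, ℝ), (∀ x, g x ≤ φ x) ∧ ∫ x, φ x ∂μ ≤ ∫ x, g x ∂μ + ε * (μ.real Set.univ + 1) := by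
  set A : ℕ → Set T := fun j => φ ⁻¹' Set.Ioi ((j + 1) * ε)
  set δ : ℝ := 1 / (n + 1)
  have hδ : 0 < δ := by positivity
  have hA : ∀ j, IsOpen (A j) := fun j => hφ.isOpen_preimage _
  choose h hhA hμA using fun j => (hA j).exists_continuous_le_indicator_measureReal_le (μ := μ) hδ
  set step : T → ℝ := fun x => ∑ j ∈ range n, (A j).indicator (fun _ => ε) x
  have hstep : ∀ x, step x = ∑ j ∈ range n, (if (j + 1) * ε < φ x then ε else 0) := fun x =>
    sum_congr rfl fun j _ => by by_cases hx : (j + 1) * ε < φ x <;> simp [A, hx]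
  have hgstep : ∀ x, ∑ j ∈ range n, ε * h j x ≤ step x := fun x => by
    refine sum_le_sum fun j _ => ?_
    have := mul_le_mul_of_nonneg_left (hhA j x) hε.le
    by_cases hx : x ∈ A j <;> simpa [hx] using this
  refine ⟨∑ j ∈ range n, ε • h j, fun x => ?_, ?_⟩
  · calc (∑ j ∈ range n, ε • h j) x = ∑ j ∈ range n, ε * h j x := by simp
      _ ≤ step x := hgstep x
      _ ≤ φ x := (hstep x).symm ▸ sum_range_ite_lt_le hε (h0 x) (hn x)
  have hφint : Integrable φ μ :=
    hφ.integrable_of_abs_le fun x => (abs_of_nonneg (h0 x)).trans_le (hn x)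
  have hstepint : Integrable step μ :=
    integrable_finsetSum _ fun j _ => (integrable_const ε).indicator (hA j).measurableSet
  have hnδ : (n : ℝ) * δ ≤ 1 := by
    rw [mul_one_div, div_le_one (by positivity)]; linarith
  calc ∫ x, φ x ∂μ ≤ ∫ x, ε + step x ∂μ := integral_mono hφint
        ((integrable_const ε).add hstepint)
        fun x => (hstep x).symm ▸ le_add_sum_range_ite_lt hε (h0 x) (hn x)
    _ = ε * μ.real Set.univ + ∑ j ∈ range n, ε * μ.real (A j) := by
        rw [integral_add (integrable_const ε) hstepint, integral_const, smul_eq_mul, mul_comm,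
          integral_finsetSum _ fun j _ => (integrable_const ε).indicator (hA j).measurableSet]
        simp only [integral_indicator_const _ (hA _).measurableSet, smul_eq_mul, mul_comm]
    _ ≤ ε * μ.real Set.univ + ∑ j ∈ range n, ε * (∫ x, h j x ∂μ + δ) := by
        gcongr with j; exact hμA j
    _ = ∫ x, (∑ j ∈ range n, ε • h j) x ∂μ + ε * μ.real Set.univ + n * ε * δ := by
        simp only [ContinuousMap.coe_sum, ContinuousMap.coe_smul, Finset.sum_apply, Pi.smul_apply,
          smul_eq_mul]
        rw [integral_finsetSum _ fun j _ => (h j).integrable_of_compactSpace.const_mul ε]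
        simp only [integral_const_mul, mul_add, sum_add_distrib, sum_const, card_range,
          nsmul_eq_mul]
        ring
    _ ≤ ∫ x, (∑ j ∈ range n, ε • h j) x ∂μ + ε * (μ.real Set.univ + 1) := by
        nlinarith

theorem LowerSemicontinuous.exists_continuous_le_integral_le [CompactSpace T] [T2Space T]
    [BorelSpace T] [μ.InnerRegularCompactLTTop] {u : T → ℝ} (hu : LowerSemicontinuous u)
    {C : ℝ} (hC : ∀ x, |u x| ≤ C) {ε : ℝ} (hε : 0 < ε) :
    ∃ g : C(T, ℝ), (∀ x, g x ≤ u x) ∧ ∫ x, u x ∂μ ≤ ∫ x, g x ∂μ + ε := by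
  set ε' := ε / (μ.real Set.univ + 1)
  have hε' : 0 < ε' := by positivity
  set n := ⌈2 * C / ε'⌉₊
  have hn : 2 * C ≤ n * ε' := (div_le_iff₀ hε').mp (Nat.le_ceil _)
  have hφ : LowerSemicontinuous fun x => u x + C := hu.add lowerSemicontinuous_const
  obtain ⟨g, hgu, hint⟩ := hφ.exists_continuous_le_integral_le_of_nonneg (μ := μ) hε' (n := n)
    (fun x => by linarith [(abs_le.mp (hC x)).1]) (fun x => by linarith [(abs_le.mp (hC x)).2])
  refine ⟨g - ContinuousMap.const T C, fun x => by
    simp only [ContinuousMap.sub_apply, ContinuousMap.const_apply]; linarith [hgu x], ?_⟩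
  simp only [ContinuousMap.sub_apply, ContinuousMap.const_apply]
  rw [integral_sub g.integrable_of_compactSpace (integrable_const C)]
  rw [integral_add (hu.integrable_of_abs_le hC) (integrable_const C)] at hint
  simp only [integral_const, smul_eq_mul] at hint ⊢
  have : ε' * (μ.real Set.univ + 1) = ε := div_mul_cancel₀ _ (by positivity)
  linarith

end Approximation

theorem LowerSemicontinuousOn.lowerSemicontinuous_piecewise {α β : Type*} [TopologicalSpace α]
    [Preorder β] {X : Set α} [DecidablePred (· ∈ X)] {u : α → β} (hu : LowerSemicontinuousOn u X)
    (hX : IsClosed X) {C : β} (hC : ∀ x ∈ X, u x ≤ C) :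
    LowerSemicontinuous (X.piecewise u fun _ => C) := by
  intro x y hy
  by_cases hx : x ∈ X
  · rw [Set.piecewise_eq_of_mem _ _ _ hx] at hy
    rw [← nhdsWithin_univ, ← Set.union_compl_self X, nhdsWithin_union, Filter.eventually_sup]
    constructor
    · filter_upwards [hu x hx y hy, self_mem_nhdsWithin] with x' hx'y hx'
      rwa [Set.piecewise_eq_of_mem _ _ _ hx']
    · filter_upwards [self_mem_nhdsWithin] with x' hx'
      rw [Set.piecewise_eq_of_notMem _ _ _ hx']
      exact hy.trans_le (hC x hx)
  · rw [Set.piecewise_eq_of_notMem _ _ _ hx] at hy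
    filter_upwards [hX.isOpen_compl.mem_nhds hx] with x' hx'
    rwa [Set.piecewise_eq_of_notMem _ _ _ hx']

theorem exists_linearMap_le_of_sublinear {V : Type*} [AddCommGroup V] [Module ℝ V] (N : V → ℝ)
    (hsmul : ∀ c : ℝ, 0 < c → ∀ x, N (c • x) = c * N x) (hadd : ∀ x y, N (x + y) ≤ N x + N y) :
    ∃ L : V →ₗ[ℝ] ℝ, ∀ x, L x ≤ N x := by
  have hN0 : N 0 = 0 := by
    have := hsmul 2 two_pos 0
    rw [smul_zero] at this
    linarith
  obtain ⟨L, -, hL⟩ := exists_extension_of_le_sublinear ⟨⊥, 0⟩ N hsmul hadd fun ⟨x, hx⟩ => by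
    rw [Submodule.mem_bot] at hx; subst hx; simp [hN0]
  exact ⟨L, hL⟩

section JensenFunctional

variable {M : Type*} (E : Set (M → ℝ)) (X : Set M) (u : M → ℝ) (z : M) (s : ℝ)

/-- Every element bounds `L f` for any linear `L` with `L h ≤ sup_X h`, `v z ≤ L v` on `E` and
`L g ≤ s` whenever `g ≤ u` on `X`; the infimum is the sublinear functional of the header. -/
def jensenUpperBounds (f : M → ℝ) : Set ℝ :=
  {b | ∃ v ∈ E, ∃ t c : ℝ, 0 ≤ t ∧ (∀ x ∈ X, f x + v x ≤ c + t * u x) ∧ b = t * s - v z + c}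

variable {E X u z s}

theorem apply_le_of_forall_mem_le (hmax : ∀ f ∈ E, ∃ x ∈ X, ∀ y, f y ≤ f x) {v : M → ℝ}
    (hv : v ∈ E) {c : ℝ} (hc : ∀ x ∈ X, v x ≤ c) (y : M) : v y ≤ c :=
  let ⟨x, hxX, hx⟩ := hmax v hv
  (hx y).trans (hc x hxX)

theorem apply_le_mul_of_forall_mem_le_mul (hsmul : ∀ f ∈ E, ∀ t : ℝ, 0 ≤ t → t • f ∈ E)
    (hmax : ∀ f ∈ E, ∃ x ∈ X, ∀ y, f y ≤ f x) (hs : ∀ v ∈ E, (∀ x ∈ X, v x ≤ u x) → v z ≤ s)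
    {v : M → ℝ} (hv : v ∈ E) {t : ℝ} (ht : 0 ≤ t) (hvu : ∀ x ∈ X, v x ≤ t * u x) :
    v z ≤ t * s := by
  rcases ht.eq_or_lt with rfl | ht
  · simpa using apply_le_of_forall_mem_le hmax hv (by simpa using hvu) z
  · have := hs (t⁻¹ • v) (hsmul v hv _ (inv_nonneg.2 ht.le)) fun x hx => by
      simpa [inv_mul_le_iff₀ ht] using hvu x hx
    simpa [inv_mul_le_iff₀ ht] using this

theorem le_of_mem_jensenUpperBounds (hadd : ∀ f ∈ E, ∀ g ∈ E, f + g ∈ E)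
    (hsmul : ∀ f ∈ E, ∀ t : ℝ, 0 ≤ t → t • f ∈ E) (hconst : ∀ c : ℝ, (fun _ : M => c) ∈ E)
    (hmax : ∀ f ∈ E, ∃ x ∈ X, ∀ y, f y ≤ f x) (hs : ∀ v ∈ E, (∀ x ∈ X, v x ≤ u x) → v z ≤ s)
    {f : M → ℝ} {m : ℝ} (hm : ∀ x ∈ X, m ≤ f x) {b : ℝ}
    (hb : b ∈ jensenUpperBounds E X u z s f) : m ≤ b := by
  obtain ⟨v, hv, t, c, ht, hfv, rfl⟩ := hb
  have := apply_le_mul_of_forall_mem_le_mul hsmul hmax hs (hadd v hv _ (hconst (m - c))) ht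
    fun x hx => by simp only [Pi.add_apply]; linarith [hfv x hx, hm x hx]
  simp only [Pi.add_apply] at this
  linarith

theorem jensenUpperBounds_add_subset (hadd : ∀ f ∈ E, ∀ g ∈ E, f + g ∈ E) (f g : M → ℝ) :
    jensenUpperBounds E X u z s f + jensenUpperBounds E X u z s g ⊆
      jensenUpperBounds E X u z s (f + g) := by
  rintro _ ⟨_, ⟨v₁, hv₁, t₁, c₁, ht₁, h₁, rfl⟩, _, ⟨v₂, hv₂, t₂, c₂, ht₂, h₂, rfl⟩, rfl⟩
  exact ⟨v₁ + v₂, hadd _ hv₁ _ hv₂, t₁ + t₂, c₁ + c₂, add_nonneg ht₁ ht₂,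
    fun x hx => by simp only [Pi.add_apply]; linarith [h₁ x hx, h₂ x hx],
    by simp only [Pi.add_apply]; ring⟩

theorem smul_jensenUpperBounds_subset (hsmul : ∀ f ∈ E, ∀ t : ℝ, 0 ≤ t → t • f ∈ E) {a : ℝ}
    (ha : 0 ≤ a) (f : M → ℝ) :
    a • jensenUpperBounds E X u z s f ⊆ jensenUpperBounds E X u z s (a • f) := by
  rintro _ ⟨_, ⟨v, hv, t, c, ht, h, rfl⟩, rfl⟩
  exact ⟨a • v, hsmul v hv a ha, a * t, a * c, mul_nonneg ha ht,
    fun x hx => by simp only [Pi.smul_apply, smul_eq_mul]; nlinarith [h x hx],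
    by simp only [Pi.smul_apply, smul_eq_mul]; ring⟩

theorem mem_jensenUpperBounds_of_forall_le_const (hconst : ∀ c : ℝ, (fun _ : M => c) ∈ E)
    {f : M → ℝ} {c : ℝ} (hfc : ∀ x ∈ X, f x ≤ c) : c ∈ jensenUpperBounds E X u z s f :=
  ⟨0, hconst 0, 0, c, le_rfl, fun x hx => by simpa using hfc x hx, by simp⟩

theorem neg_apply_mem_jensenUpperBounds {v : M → ℝ} (hv : v ∈ E) :
    -v z ∈ jensenUpperBounds E X u z s (-v) :=
  ⟨v, hv, 0, 0, le_rfl, fun x _ => by simp, by simp⟩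

theorem mem_jensenUpperBounds_of_forall_le (hconst : ∀ c : ℝ, (fun _ : M => c) ∈ E) {g : M → ℝ}
    (hg : ∀ x ∈ X, g x ≤ u x) : s ∈ jensenUpperBounds E X u z s g :=
  ⟨0, hconst 0, 1, 0, zero_le_one, fun x hx => by simpa using hg x hx, by simp⟩

theorem exists_jensen_functional [TopologicalSpace M] (hX : IsCompact X)
    (hadd : ∀ f ∈ E, ∀ g ∈ E, f + g ∈ E) (hsmul : ∀ f ∈ E, ∀ t : ℝ, 0 ≤ t → t • f ∈ E)
    (hconst : ∀ c : ℝ, (fun _ : M => c) ∈ E) (hmax : ∀ f ∈ E, ∃ x ∈ X, ∀ y, f y ≤ f x)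
    (hs : ∀ v ∈ E, (∀ x ∈ X, v x ≤ u x) → v z ≤ s) :
    ∃ L : C(M, ℝ) →ₗ[ℝ] ℝ, (∀ (f : C(M, ℝ)) (c : ℝ), (∀ x ∈ X, f x ≤ c) → L f ≤ c) ∧
      (∀ f : C(M, ℝ), ⇑f ∈ E → f z ≤ L f) ∧ (∀ g : C(M, ℝ), (∀ x ∈ X, g x ≤ u x) → L g ≤ s) := by
  set S : C(M, ℝ) → Set ℝ := fun f => jensenUpperBounds E X u z s f
  have hne : ∀ f : C(M, ℝ), (S f).Nonempty := fun f =>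
    let ⟨c, hc⟩ := hX.bddAbove_image f.continuous.continuousOn
    ⟨c, mem_jensenUpperBounds_of_forall_le_const hconst fun x hx => hc ⟨x, hx, rfl⟩⟩
  have hbdd : ∀ f : C(M, ℝ), BddBelow (S f) := fun f =>
    let ⟨m, hm⟩ := hX.bddBelow_image f.continuous.continuousOn
    ⟨m, fun _ hb => le_of_mem_jensenUpperBounds hadd hsmul hconst hmax hs
      (fun x hx => hm ⟨x, hx, rfl⟩) hb⟩
  have hsmul_eq : ∀ a : ℝ, 0 < a → ∀ f : C(M, ℝ), S (a • f) = a • S f := fun a ha f => by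
    refine (Set.subset_smul_set_iff₀ ha.ne').mpr ?_ |>.antisymm
      (smul_jensenUpperBounds_subset hsmul ha.le f)
    simpa [S, smul_smul, inv_mul_cancel₀ ha.ne'] using smul_jensenUpperBounds_subset
      (X := X) (u := u) (z := z) (s := s) hsmul (inv_nonneg.2 ha.le) ⇑(a • f)
  obtain ⟨L, hL⟩ := exists_linearMap_le_of_sublinear (fun f => sInf (S f))
    (fun a ha f => by simp only [hsmul_eq a ha f, Real.sInf_smul_of_nonneg ha.le, smul_eq_mul])
    (fun f g => by
      rw [← csInf_add (hne f) (hbdd f) (hne g) (hbdd g)]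
      exact csInf_le_csInf (hbdd _) ((hne f).add (hne g)) (jensenUpperBounds_add_subset hadd f g))
  have hLle : ∀ f b, b ∈ S f → L f ≤ b := fun f b hb => (hL f).trans (csInf_le (hbdd f) hb)
  refine ⟨L, fun f c hfc => hLle f c (mem_jensenUpperBounds_of_forall_le_const hconst hfc),
    fun f hf => ?_, fun g hg => hLle g s (mem_jensenUpperBounds_of_forall_le hconst hg)⟩
  have := hLle (-f) _ (neg_apply_mem_jensenUpperBounds hf)
  rw [map_neg] at this
  linarith

end JensenFunctional

theorem LinearMap.exists_isProbabilityMeasure_integral_eq {M : Type*} [TopologicalSpace M]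
    [CompactSpace M] [T2Space M] [MeasurableSpace M] [BorelSpace M] {X : Set M} (hX : IsClosed X)
    (L : C(M, ℝ) →ₗ[ℝ] ℝ) (hL : ∀ (f : C(M, ℝ)) (c : ℝ), (∀ x ∈ X, f x ≤ c) → L f ≤ c) :
    ∃ μ : Measure M, IsProbabilityMeasure μ ∧ μ.Regular ∧ μ Xᶜ = 0 ∧
      ∀ f : C(M, ℝ), ∫ x, f x ∂μ = L f := by
  let toContinuousMap : CompactlySupportedContinuousMap M ℝ →ₗ[ℝ] C(M, ℝ) :=
    { toFun f := f.toContinuousMap, map_add' _ _ := rfl, map_smul' _ _ := rfl }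
  have hpos : ∀ f : C(M, ℝ), 0 ≤ f → 0 ≤ L f := fun f hf => by
    have := hL (-f) 0 fun x _ => by simpa using hf x
    rw [map_neg] at this
    linarith
  let Λ := PositiveLinearMap.mk₀ (L ∘ₗ toContinuousMap) fun f hf => hpos _ hf
  let μ := RealRMK.rieszMeasure Λ
  have hμL : ∀ f : C(M, ℝ), ∫ x, f x ∂μ = L f := fun f =>
    RealRMK.integral_rieszMeasure Λ (CompactlySupportedContinuousMap.continuousMapEquiv f)
  have hL1 : L 1 = 1 := by
    have h1 := hL 1 1 fun x _ => le_rfl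
    have h2 := hL (-1) (-1) fun x _ => le_rfl
    rw [map_neg] at h2
    linarith
  have hμ1 : μ.real Set.univ = 1 := by simpa [hL1] using hμL 1
  refine ⟨μ, ⟨(ENNReal.toReal_eq_one_iff _).mp hμ1⟩, inferInstance, ?_, hμL⟩
  refine (measureReal_eq_zero_iff (measure_ne_top μ _)).mp (le_antisymm ?_ measureReal_nonneg)
  refine le_of_forall_pos_le_add fun δ hδ => ?_
  obtain ⟨h, hhX, hμh⟩ := hX.isOpen_compl.exists_continuous_le_indicator_measureReal_le (μ := μ) hδ
  have hLh : L h ≤ 0 := hL h 0 fun x hx => by simpa [hx] using hhX x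
  linarith [hμL h]

def IsJensenMeasure {M : Type*} [MeasurableSpace M] (E : Set (M → ℝ)) (X : Set M) (z : M)
    (μ : Measure M) : Prop :=
  IsProbabilityMeasure μ ∧ μ Xᶜ = 0 ∧ ∀ v ∈ E, v z ≤ ∫ x, v x ∂μ

theorem exists_isJensenMeasure_and_sSup_eq_sInf {M : Type*} [TopologicalSpace M]
    [CompactSpace M] [T2Space M] [MeasurableSpace M] [BorelSpace M] {E : Set (M → ℝ)}
    (hcont : ∀ f ∈ E, Continuous f) (hadd : ∀ f ∈ E, ∀ g ∈ E, f + g ∈ E)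
    (hsmul : ∀ f ∈ E, ∀ t : ℝ, 0 ≤ t → t • f ∈ E) (hconst : ∀ c : ℝ, (fun _ : M => c) ∈ E)
    {X : Set M} (hX : IsCompact X) (hmax : ∀ f ∈ E, ∃ x ∈ X, ∀ y, f y ≤ f x) {u : M → ℝ}
    (hu : LowerSemicontinuous u) {C : ℝ} (hC : ∀ x, |u x| ≤ C) (z : M) :
    (∃ μ, IsJensenMeasure E X z μ) ∧
      sSup {t | ∃ v ∈ E, (∀ x ∈ X, v x ≤ u x) ∧ t = v z} =
        sInf {t | ∃ μ, IsJensenMeasure E X z μ ∧ t = ∫ x, u x ∂μ} := by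
  set s := sSup {t | ∃ v ∈ E, (∀ x ∈ X, v x ≤ u x) ∧ t = v z}
  have hs : ∀ v ∈ E, (∀ x ∈ X, v x ≤ u x) → v z ≤ s := fun v hv hvu => by
    refine le_csSup ⟨C, ?_⟩ ⟨v, hv, hvu, rfl⟩
    rintro _ ⟨w, hw, hwu, rfl⟩
    exact apply_le_of_forall_mem_le hmax hw (fun x hx => (hwu x hx).trans (abs_le.mp (hC x)).2) z
  obtain ⟨L, hLX, hLE, hLu⟩ := exists_jensen_functional hX hadd hsmul hconst hmax hs
  obtain ⟨μ, hμ, hμreg, hμX, hμL⟩ := L.exists_isProbabilityMeasure_integral_eq hX.isClosed hLX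
  have hμJ : IsJensenMeasure E X z μ :=
    ⟨hμ, hμX, fun v hv => (hμL ⟨v, hcont v hv⟩).symm ▸ hLE ⟨v, hcont v hv⟩ hv⟩
  have hlower : ∀ ν, IsJensenMeasure E X z ν → s ≤ ∫ x, u x ∂ν := by
    rintro ν ⟨hν, hνX, hνE⟩
    refine csSup_le ⟨_, fun _ => -C, hconst _, fun x _ => (abs_le.mp (hC x)).1, rfl⟩ ?_
    rintro _ ⟨v, hv, hvu, rfl⟩
    refine (hνE v hv).trans (integral_mono_ae
      (ContinuousMap.integrable_of_compactSpace ⟨v, hcont v hv⟩) (hu.integrable_of_abs_le hC) ?_)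
    filter_upwards [measure_eq_zero_iff_ae_notMem.mp hνX] with x hx
    exact hvu x (not_not.mp hx)
  have hupper : ∫ x, u x ∂μ ≤ s := by
    refine le_of_forall_pos_le_add fun ε hε => ?_
    obtain ⟨g, hgu, hg⟩ := hu.exists_continuous_le_integral_le (μ := μ) hC hε
    linarith [hLu g fun x _ => hgu x, hμL g]
  have hbdd : ∀ t ∈ {t | ∃ ν, IsJensenMeasure E X z ν ∧ t = ∫ x, u x ∂ν}, s ≤ t := by
    rintro _ ⟨ν, hν, rfl⟩
    exact hlower ν hν
  exact ⟨⟨μ, hμJ⟩, le_antisymm (le_csInf ⟨_, μ, hμJ, rfl⟩ hbdd)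
    ((csInf_le ⟨s, hbdd⟩ ⟨μ, hμJ, rfl⟩).trans hupper)⟩

theorem choquet_edwards_general
    {M : Type*} [TopologicalSpace M] [CompactSpace M] [T2Space M]
    [MeasurableSpace M] [BorelSpace M]
    (E : Set (M → ℝ))
    (hcont : ∀ f ∈ E, Continuous f)
    (hadd : ∀ f ∈ E, ∀ g ∈ E, f + g ∈ E)
    (hsmul : ∀ f ∈ E, ∀ t : ℝ, 0 ≤ t → t • f ∈ E)
    (hconst : ∀ c : ℝ, (fun _ : M => c) ∈ E)
    (X : Set M) (hX : IsCompact X)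
    (hmax : ∀ f ∈ E, ∃ x ∈ X, ∀ y : M, f y ≤ f x)
    (u : M → ℝ)
    (hbd : ∃ C : ℝ, ∀ x ∈ X, |u x| ≤ C)
    (hlsc : LowerSemicontinuousOn u X)
    (uhat : M → ℝ)
    (huhat : ∀ z : M,
      uhat z = sSup {t : ℝ | ∃ v ∈ E, (∀ x ∈ X, v x ≤ u x) ∧ t = v z}) :
    ∀ z : M,
      (∃ μ : Measure M, IsProbabilityMeasure μ ∧ μ Xᶜ = 0 ∧
          ∀ v ∈ E, v z ≤ ∫ x, v x ∂μ) ∧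
      uhat z = sInf {t : ℝ | ∃ μ : Measure M,
        (IsProbabilityMeasure μ ∧ μ Xᶜ = 0 ∧ ∀ v ∈ E, v z ≤ ∫ x, v x ∂μ) ∧
        t = ∫ x, u x ∂μ} := by
  classical
  intro z
  obtain ⟨C, hC⟩ := hbd
  obtain ⟨x₀, hx₀, -⟩ := hmax _ (hconst 0)
  set ū := X.piecewise u fun _ => C
  have hūC : ∀ x, |ū x| ≤ C := fun x => by
    by_cases hx : x ∈ X
    · simpa [ū, hx] using hC x hx
    · simp [ū, hx, abs_of_nonneg ((abs_nonneg _).trans (hC x₀ hx₀))]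
  have hūX : ∀ x ∈ X, ū x = u x := fun x hx => Set.piecewise_eq_of_mem _ _ _ hx
  have hminorants : ∀ v : M → ℝ, (∀ x ∈ X, v x ≤ u x) ↔ ∀ x ∈ X, v x ≤ ū x := fun v =>
    forall₂_congr fun x hx => by rw [hūX x hx]
  have hintegral : ∀ μ : Measure M, μ Xᶜ = 0 → ∫ x, u x ∂μ = ∫ x, ū x ∂μ := fun μ hμ =>
    integral_congr_ae <| (measure_eq_zero_iff_ae_notMem.mp hμ).mono fun x hx =>
      (hūX x (not_not.mp hx)).symm
  have hjensen : {t : ℝ | ∃ μ : Measure M, (IsProbabilityMeasure μ ∧ μ Xᶜ = 0 ∧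
      ∀ v ∈ E, v z ≤ ∫ x, v x ∂μ) ∧ t = ∫ x, u x ∂μ} =
      {t | ∃ μ, IsJensenMeasure E X z μ ∧ t = ∫ x, ū x ∂μ} := by
    ext t
    exact exists_congr fun μ => and_congr_right fun hμ => by rw [hintegral μ hμ.2.1]
  rw [huhat z, hjensen]
  simp only [hminorants]
  exact exists_isJensenMeasure_and_sSup_eq_sInf hcont hadd hsmul hconst hX hmax
    (hlsc.lowerSemicontinuous_piecewise hX.isClosed fun x hx => (abs_le.mp (hC x hx)).2) hūC z

/-- **Choquet–Edwards theorem** (Theorem 3.3 of the paper).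
`M` is a nonempty compact Hausdorff space, `E` a convex cone of continuous
functions containing constants and separating points, `X ⊆ M` a compact set on
which every function of `E` attains its maximum over `M`.  For a bounded lower
semicontinuous `u` on `X`, the upper envelope `û` is the infimum of the
integrals of `u` against Jensen measures supported on `X`. -/
theorem choquet_edwards
    {M : Type*} [TopologicalSpace M] [CompactSpace M] [T2Space M] [Nonempty M]
    [MeasurableSpace M] [BorelSpace M]
    (E : Set (M → ℝ))
    (hcont : ∀ f ∈ E, Continuous f)
    (hadd : ∀ f ∈ E, ∀ g ∈ E, f + g ∈ E)
    (hsmul : ∀ f ∈ E, ∀ t : ℝ, 0 ≤ t → t • f ∈ E)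
    (hconst : ∀ c : ℝ, (fun _ : M => c) ∈ E)
    (hsep : ∀ x y : M, x ≠ y → ∃ f ∈ E, f x ≠ f y)
    (X : Set M) (hX : IsCompact X)
    (hmax : ∀ f ∈ E, ∃ x ∈ X, ∀ y : M, f y ≤ f x)
    (u : M → ℝ)
    (hbd : ∃ C : ℝ, ∀ x ∈ X, |u x| ≤ C)
    (hlsc : LowerSemicontinuousOn u X)
    (uhat : M → ℝ)
    (huhat : ∀ z : M,
      uhat z = sSup {t : ℝ | ∃ v ∈ E, (∀ x ∈ X, v x ≤ u x) ∧ t = v z}) :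
    ∀ z : M,
      (∃ μ : Measure M, IsProbabilityMeasure μ ∧ μ Xᶜ = 0 ∧
          ∀ v ∈ E, v z ≤ ∫ x, v x ∂μ) ∧
      uhat z = sInf {t : ℝ | ∃ μ : Measure M,
        (IsProbabilityMeasure μ ∧ μ Xᶜ = 0 ∧ ∀ v ∈ E, v z ≤ ∫ x, v x ∂μ) ∧
        t = ∫ x, u x ∂μ} :=
  choquet_edwards_general E hcont hadd hsmul hconst X hX hmax u hbd hlsc uhat huhat
end

section
/- Let Γ be a cone field on ℂᵏ (k ≥ 1) and let U ⊆ ℂᵏ be a nonempty bounded open set. Then for every u ∈ P_Γ and every x in the closure of U, u(x) ≤ sup_{ζ ∈ ∂U} u(ζ). In particular, the closure of U is contained in the Γ-hull of ∂U, i.e. Ū ⊆ (∂U)̂_Γ. -/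
/-!
At a local maximum of `v = u + ε‖·‖²` the real Hessian of `v` is negative semidefinite, so
`L(v, z, ξ) ≤ 0` for every `ξ`. But `L(v, z, ξ) = L(u, z, ξ) + ε‖ξ‖²`, which is `> 0` for the
nonzero `ξ ∈ Γ_z` that a cone field provides. So `v` has no interior maximum on `U`, its maximum
over the compact set `Ū` is attained on `∂U`, and `u ≤ sup_{∂U} u + ε R²` on `Ū ⊆ B(0, R)`.
Let `ε → 0`.
-/

noncomputable section

abbrev Ck (k : ℕ) := EuclideanSpace ℂ (Fin k)

/-- Levi form of a function `u : ℂᵏ → ℝ` at `z` in direction `ξ`. -/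
def Levi {k : ℕ} (u : Ck k → ℝ) (z ξ : Ck k) : ℝ :=
  (1 / 4) * (iteratedFDeriv ℝ 2 u z ![ξ, ξ] +
    iteratedFDeriv ℝ 2 u z ![(Complex.I : ℂ) • ξ, (Complex.I : ℂ) • ξ])

/-- A cone field on `ℂᵏ`. -/
structure ConeField (k : ℕ) where
  Γ : Ck k → Set (Ck k)
  smul_mem : ∀ z : Ck k, ∀ ξ ∈ Γ z, ∀ t : ℝ, 0 ≤ t → t • ξ ∈ Γ z
  exists_ne_zero : ∀ z : Ck k, ∃ ξ ∈ Γ z, ξ ≠ 0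
  isClosed : IsClosed {p : Ck k × Ck k | p.2 ∈ Γ p.1}

/-- The cone `P_Γ`. -/
def PGamma {k : ℕ} (G : ConeField k) : Set (Ck k → ℝ) :=
  {u | ContDiff ℝ 2 u ∧ ∀ z : Ck k, ∀ ξ ∈ G.Γ z, 0 ≤ Levi u z ξ}

/-- The `Γ`-hull of a compact set `K`. -/
def gammaHull {k : ℕ} (G : ConeField k) (K : Set (Ck k)) : Set (Ck k) :=
  {z | ∀ u ∈ PGamma G, u z ≤ sSup (u '' K)}

open Filter Topology

theorem le_of_forall_pos_le_add_mul {a b c : ℝ} (h : ∀ ε > 0, a ≤ b + ε * c) : a ≤ b := by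
  have hlim : Tendsto (fun ε : ℝ => b + ε * c) (𝓝[>] 0) (𝓝 b) := by
    simpa using (((continuous_id.mul continuous_const).const_add b).tendsto 0).mono_left
      nhdsWithin_le_nhds
  exact ge_of_tendsto hlim (eventually_nhdsWithin_of_forall h)

theorem exists_mem_frontier_le_of_forall_not_isLocalMax {X : Type*} [TopologicalSpace X]
    {U : Set X} (hU : IsCompact (closure U)) {f : X → ℝ} (hf : ContinuousOn f (closure U))
    (hf_max : ∀ z ∈ interior U, ¬IsLocalMax f z) {x : X} (hx : x ∈ closure U) :
    ∃ y ∈ frontier U, f x ≤ f y := by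
  obtain ⟨y, hyU, hy⟩ := hU.exists_isMaxOn ⟨x, hx⟩ hf
  refine ⟨y, ⟨hyU, fun hyi => hf_max y hyi ?_⟩, hy hx⟩
  exact mem_of_superset (mem_interior_iff_mem_nhds.mp hyi) fun z hz =>
    hy (subset_closure hz)

theorem IsLocalMax.deriv_deriv_nonpos {f : ℝ → ℝ} {a : ℝ} (h : IsLocalMax f a)
    (hc : ContinuousAt f a) : deriv (deriv f) a ≤ 0 := by
  by_contra! hpos
  have hconst : f =ᶠ[𝓝 a] fun _ => f a :=
    (h.and (isLocalMin_of_deriv_deriv_pos hpos h.deriv_eq_zero hc)).mono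
      fun _ hx => le_antisymm hx.1 hx.2
  have hzero : deriv (deriv f) a = 0 := by
    rw [hconst.deriv.deriv_eq]
    simp
  exact hpos.ne' hzero

section SecondDerivative

variable {E : Type*} [NormedAddCommGroup E] [NormedSpace ℝ E]

theorem deriv_deriv_comp_add_smul {f : E → ℝ} (hf : ContDiff ℝ 2 f) (x v : E) :
    deriv (deriv fun t : ℝ => f (x + t • v)) 0 = iteratedFDeriv ℝ 2 f x ![v, v] := by
  have hshift : ContDiff ℝ 2 fun y => f (x + y) := hf.comp (contDiff_const.add contDiff_id)
  have hline := (ContinuousLinearMap.toSpanSingleton ℝ v).iteratedFDeriv_comp_right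
    hshift 0 le_rfl
  have hcomp : (fun t : ℝ => f (x + t • v)) =
      (fun y => f (x + y)) ∘ ContinuousLinearMap.toSpanSingleton ℝ v := rfl
  rw [← iteratedDeriv_one, ← iteratedDeriv_succ', iteratedDeriv_eq_iteratedFDeriv, hcomp, hline]
  rw [ContinuousMultilinearMap.compContinuousLinearMap_apply, iteratedFDeriv_comp_add_left]
  simp only [ContinuousLinearMap.toSpanSingleton_apply, one_smul, zero_smul, add_zero]
  congr 1
  ext i : 1
  fin_cases i <;> rfl

theorem IsLocalMax.iteratedFDeriv_two_nonpos {f : E → ℝ} {x : E} (h : IsLocalMax f x)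
    (hf : ContDiff ℝ 2 f) (v : E) : iteratedFDeriv ℝ 2 f x ![v, v] ≤ 0 := by
  have hline : Continuous fun t : ℝ => x + t • v :=
    continuous_const.add (continuous_id.smul continuous_const)
  have hmax : IsLocalMax (fun t : ℝ => f (x + t • v)) 0 :=
    IsLocalMax.comp_continuous (by simpa using h) hline.continuousAt
  rw [← deriv_deriv_comp_add_smul hf]
  exact hmax.deriv_deriv_nonpos (hf.continuous.comp hline).continuousAt

end SecondDerivative

section NormSq

variable {F : Type*} [NormedAddCommGroup F] [InnerProductSpace ℝ F]

theorem iteratedFDeriv_two_norm_sq_apply (x : F) (m : Fin 2 → F) :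
    iteratedFDeriv ℝ 2 (fun z : F => ‖z‖ ^ 2) x m = 2 * inner ℝ (m 0) (m 1) := by
  rw [iteratedFDeriv_two_apply, fderiv_norm_sq, ← FunLike.coe_smul, ContinuousLinearMap.fderiv,
    smul_apply, smul_apply, innerSL_apply_apply, nsmul_eq_mul, Nat.cast_ofNat]

theorem iteratedFDeriv_two_add_mul_norm_sq_apply {u : F → ℝ} {x : F} (hu : ContDiffAt ℝ 2 u x)
    (ε : ℝ) (m : Fin 2 → F) :
    iteratedFDeriv ℝ 2 (fun z => u z + ε * ‖z‖ ^ 2) x m =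
      iteratedFDeriv ℝ 2 u x m + 2 * ε * inner ℝ (m 0) (m 1) := by
  have hq : ContDiffAt ℝ 2 (fun z : F => ‖z‖ ^ 2) x := (contDiff_norm_sq ℝ).contDiffAt
  have hsum := fun_iteratedFDeriv_add_apply hu (hq.const_smul ε)
  have hscale := iteratedFDeriv_const_smul_apply' (a := ε) hq
  simp only [smul_eq_mul] at hsum hscale
  rw [hsum, hscale, add_apply, smul_apply, iteratedFDeriv_two_norm_sq_apply, smul_eq_mul]
  ring

end NormSq

theorem levi_add_mul_norm_sq {k : ℕ} {u : Ck k → ℝ} {z : Ck k} (hu : ContDiffAt ℝ 2 u z)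
    (ε : ℝ) (ξ : Ck k) :
    Levi (fun w => u w + ε * ‖w‖ ^ 2) z ξ = Levi u z ξ + ε * ‖ξ‖ ^ 2 := by
  simp only [Levi, iteratedFDeriv_two_add_mul_norm_sq_apply hu, Matrix.cons_val_zero,
    Matrix.cons_val_one, real_inner_self_eq_norm_sq, norm_smul, Complex.norm_I, one_mul]
  ring

theorem IsLocalMax.levi_nonpos {k : ℕ} {u : Ck k → ℝ} {z : Ck k} (h : IsLocalMax u z)
    (hu : ContDiff ℝ 2 u) (ξ : Ck k) : Levi u z ξ ≤ 0 := by
  have hξ := h.iteratedFDeriv_two_nonpos hu ξ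
  have hiξ := h.iteratedFDeriv_two_nonpos hu ((Complex.I : ℂ) • ξ)
  rw [Levi]
  linarith

theorem not_isLocalMax_add_mul_norm_sq {k : ℕ} {G : ConeField k} {u : Ck k → ℝ}
    (hu : u ∈ PGamma G) {ε : ℝ} (hε : 0 < ε) (z : Ck k) :
    ¬IsLocalMax (fun w => u w + ε * ‖w‖ ^ 2) z := by
  intro hmax
  obtain ⟨ξ, hξΓ, hξ⟩ := G.exists_ne_zero z
  have hnonpos := hmax.levi_nonpos (hu.1.add (contDiff_const.mul (contDiff_norm_sq ℝ))) ξ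
  rw [levi_add_mul_norm_sq hu.1.contDiffAt] at hnonpos
  have hpos : 0 < ε * ‖ξ‖ ^ 2 := by positivity
  linarith [hu.2 z ξ hξΓ]

theorem le_sSup_image_frontier_of_mem_PGamma {k : ℕ} {G : ConeField k} {U : Set (Ck k)}
    (hU : Bornology.IsBounded U) {u : Ck k → ℝ} (hu : u ∈ PGamma G) {x : Ck k}
    (hx : x ∈ closure U) : u x ≤ sSup (u '' frontier U) := by
  obtain ⟨R, hR⟩ := hU.closure.exists_norm_le
  have hbdd : BddAbove (u '' frontier U) :=
    (hU.isCompact_closure.bddAbove_image hu.1.continuous.continuousOn).mono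
      (Set.image_mono frontier_subset_closure)
  refine le_of_forall_pos_le_add_mul (c := R ^ 2) fun ε hε => ?_
  have hv : Continuous fun w : Ck k => u w + ε * ‖w‖ ^ 2 :=
    hu.1.continuous.add (continuous_const.mul (continuous_norm.pow 2))
  obtain ⟨y, hy, hxy⟩ := exists_mem_frontier_le_of_forall_not_isLocalMax hU.isCompact_closure
    hv.continuousOn (fun z _ => not_isLocalMax_add_mul_norm_sq hu hε z) hx
  have hyR : ‖y‖ ^ 2 ≤ R ^ 2 :=
    pow_le_pow_left₀ (norm_nonneg y) (hR y (frontier_subset_closure hy)) 2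
  calc u x ≤ u x + ε * ‖x‖ ^ 2 := le_add_of_nonneg_right (by positivity)
    _ ≤ u y + ε * ‖y‖ ^ 2 := hxy
    _ ≤ sSup (u '' frontier U) + ε * R ^ 2 := by
      gcongr
      exact le_csSup hbdd (Set.mem_image_of_mem u hy)

theorem closure_subset_gammaHull_frontier_general {k : ℕ}
    (G : ConeField k) (U : Set (Ck k))
    (hU_bdd : Bornology.IsBounded U) :
    (∀ u ∈ PGamma G, ∀ x ∈ closure U, u x ≤ sSup (u '' frontier U)) ∧
    closure U ⊆ gammaHull G (frontier U) :=
  ⟨fun _ hu _ hx => le_sSup_image_frontier_of_mem_PGamma hU_bdd hu hx,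
    fun _ hx _ hu => le_sSup_image_frontier_of_mem_PGamma hU_bdd hu hx⟩

/-- (ℂᵏ case of Theorem 3.8.)  For a cone field `Γ` and a nonempty bounded
open set `U ⊆ ℂᵏ`, every `u ∈ P_Γ` satisfies the maximum principle
`u(x) ≤ sup_{∂U} u` on the closure of `U`; in particular
`closure U ⊆ (∂U)̂_Γ`. -/
theorem closure_subset_gammaHull_frontier {k : ℕ} (hk : 1 ≤ k)
    (G : ConeField k) (U : Set (Ck k))
    (hU_open : IsOpen U) (hU_ne : U.Nonempty) (hU_bdd : Bornology.IsBounded U) :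
    (∀ u ∈ PGamma G, ∀ x ∈ closure U, u x ≤ sSup (u '' frontier U)) ∧
    closure U ⊆ gammaHull G (frontier U) :=
  closure_subset_gammaHull_frontier_general G U hU_bdd
end
end

section
/- Let ρ : ℂᵏ → ℝ (k ≥ 1) be a C² function whose Levi form is positive definite at every point, i.e. L(ρ,z,ξ) > 0 for every z ∈ ℂᵏ and every nonzero ξ ∈ ℂᵏ. Let φ : D → ℂᵏ be holomorphic on the open unit disc D and tangent to the kernel of ∂ρ, meaning that for every ζ ∈ D the real derivative of ρ satisfies Dρ(φ(ζ))(φ'(ζ)) = 0 and Dρ(φ(ζ))(i·φ'(ζ)) = 0 (equivalently, ρ∘φ is constant on D). Then φ is constant. -/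
/-!
Differentiating the tangency identities `Dρ(φ)(φ') = 0` and `Dρ(φ)(iφ') = 0` along `1` and `i`
respectively gives `D²ρ(φ)(φ', φ') + Dρ(φ)(φ'') = 0` and `D²ρ(φ)(iφ', iφ') - Dρ(φ)(φ'') = 0`.
Adding them, the Levi form of `ρ` at `φ` vanishes in the direction `φ'`, so `φ' = 0` by strict
plurisubharmonicity, and `φ` is constant on the connected disc.
-/

open Metric

noncomputable section

open Filter Topology

section HolomorphicCurves

variable {E : Type*} [NormedAddCommGroup E] [NormedSpace ℂ E]

theorem DifferentiableAt.fderiv_real_apply {g : ℂ → E} {ζ : ℂ} (hg : DifferentiableAt ℂ g ζ)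
    (v : ℂ) : fderiv ℝ g ζ v = v • deriv g ζ := by
  rw [hg.fderiv_restrictScalars ℝ, ContinuousLinearMap.coe_restrictScalars',
    ← toSpanSingleton_deriv, ContinuousLinearMap.toSpanSingleton_apply]

theorem fderiv_fderiv_comp_apply_smul_deriv {ρ : E → ℝ} {φ : ℂ → E} {ζ₀ : ℂ}
    (hρ : DifferentiableAt ℝ (fderiv ℝ ρ) (φ ζ₀)) (hφ : DifferentiableAt ℂ φ ζ₀)
    (hφ' : DifferentiableAt ℂ (deriv φ) ζ₀) (c v : ℂ) :
    fderiv ℝ (fun ζ => fderiv ℝ ρ (φ ζ) (c • deriv φ ζ)) ζ₀ v =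
      fderiv ℝ (fderiv ℝ ρ) (φ ζ₀) (v • deriv φ ζ₀) (c • deriv φ ζ₀) +
        fderiv ℝ ρ (φ ζ₀) ((c * v) • deriv (deriv φ) ζ₀) := by
  have hφR := hφ.restrictScalars ℝ
  have hφ'R := hφ'.restrictScalars ℝ
  have hDρφ : DifferentiableAt ℝ (fun ζ => fderiv ℝ ρ (φ ζ)) ζ₀ := hρ.comp ζ₀ hφR
  rw [fderiv_clm_apply hDρφ (hφ'R.fun_const_smul c), fderiv_fun_comp ζ₀ hρ hφR,
    fderiv_fun_const_smul hφ'R]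
  simp only [add_apply, ContinuousLinearMap.comp_apply,
    ContinuousLinearMap.flip_apply, smul_apply, hφ.fderiv_real_apply,
    hφ'.fderiv_real_apply, smul_smul, add_comm]

theorem fderiv_fderiv_apply_add_fderiv_apply_eq_zero {ρ : E → ℝ} {φ : ℂ → E} {ζ₀ : ℂ}
    (hρ : DifferentiableAt ℝ (fderiv ℝ ρ) (φ ζ₀)) (hφ : DifferentiableAt ℂ φ ζ₀)
    (hφ' : DifferentiableAt ℂ (deriv φ) ζ₀) {c : ℂ}
    (htangent : ∀ᶠ ζ in 𝓝 ζ₀, fderiv ℝ ρ (φ ζ) (c • deriv φ ζ) = 0) (v : ℂ) :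
    fderiv ℝ (fderiv ℝ ρ) (φ ζ₀) (v • deriv φ ζ₀) (c • deriv φ ζ₀) +
      fderiv ℝ ρ (φ ζ₀) ((c * v) • deriv (deriv φ) ζ₀) = 0 := by
  have hzero : (fun ζ => fderiv ℝ ρ (φ ζ) (c • deriv φ ζ)) =ᶠ[𝓝 ζ₀] fun _ => 0 := htangent
  rw [← fderiv_fderiv_comp_apply_smul_deriv hρ hφ hφ' c v, hzero.fderiv_eq, fderiv_const_apply]
  rfl

end HolomorphicCurves

theorem Levi_eq_fderiv_fderiv {k : ℕ} (u : Ck k → ℝ) (z ξ : Ck k) :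
    Levi u z ξ = (1 / 4) * (fderiv ℝ (fderiv ℝ u) z ξ ξ +
      fderiv ℝ (fderiv ℝ u) z (Complex.I • ξ) (Complex.I • ξ)) := by
  simp only [Levi, iteratedFDeriv_two_apply, Matrix.cons_val_zero, Matrix.cons_val_one]

theorem Levi_deriv_eq_zero_of_tangent {k : ℕ} {ρ : Ck k → ℝ} {φ : ℂ → Ck k} {ζ₀ : ℂ}
    (hρ : DifferentiableAt ℝ (fderiv ℝ ρ) (φ ζ₀)) (hφ : DifferentiableAt ℂ φ ζ₀)
    (hφ' : DifferentiableAt ℂ (deriv φ) ζ₀)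
    (htangent : ∀ᶠ ζ in 𝓝 ζ₀,
      fderiv ℝ ρ (φ ζ) (deriv φ ζ) = 0 ∧ fderiv ℝ ρ (φ ζ) (Complex.I • deriv φ ζ) = 0) :
    Levi ρ (φ ζ₀) (deriv φ ζ₀) = 0 := by
  have hreal := fderiv_fderiv_apply_add_fderiv_apply_eq_zero hρ hφ hφ' (c := 1)
    (htangent.mono fun ζ h => by rw [one_smul]; exact h.1) 1
  have himag := fderiv_fderiv_apply_add_fderiv_apply_eq_zero hρ hφ hφ' (c := Complex.I)
    (htangent.mono fun ζ h => h.2) Complex.I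
  rw [Complex.I_mul_I, neg_one_smul, map_neg] at himag
  rw [one_mul, one_smul, one_smul] at hreal
  rw [Levi_eq_fderiv_fderiv]
  linarith

theorem holomorphic_disc_tangent_ker_dbar_rho_const_general {k : ℕ}
    (ρ : Ck k → ℝ) (hρ : ContDiff ℝ 2 ρ)
    (hstrict : ∀ z ξ : Ck k, ξ ≠ 0 → 0 < Levi ρ z ξ)
    (φ : ℂ → Ck k) (hφ : DifferentiableOn ℂ φ (ball (0 : ℂ) 1))
    (htangent : ∀ ζ ∈ ball (0 : ℂ) 1,
      fderiv ℝ ρ (φ ζ) (deriv φ ζ) = 0 ∧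
      fderiv ℝ ρ (φ ζ) ((Complex.I : ℂ) • deriv φ ζ) = 0) :
    ∀ ζ ∈ ball (0 : ℂ) 1, ∀ ζ' ∈ ball (0 : ℂ) 1, φ ζ = φ ζ' := by
  have hρ' : Differentiable ℝ (fderiv ℝ ρ) :=
    (hρ.fderiv_right (m := 1) le_rfl).differentiable one_ne_zero
  have hderiv : Set.EqOn (deriv φ) 0 (ball (0 : ℂ) 1) := by
    intro ζ hζ
    by_contra hne
    have hnhds := isOpen_ball.mem_nhds hζ
    refine (hstrict _ _ hne).ne' (Levi_deriv_eq_zero_of_tangent (hρ' _)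
      (hφ.differentiableAt hnhds)
      ((hφ.analyticOnNhd isOpen_ball).deriv ζ hζ).differentiableAt ?_)
    filter_upwards [hnhds] using htangent
  intro ζ hζ ζ' hζ'
  exact isOpen_ball.is_const_of_deriv_eq_zero (convex_ball 0 1).isPreconnected hφ hderiv hζ hζ'

/-- (Example 3.15 of the paper.)  If `ρ` is `C²` and strictly plurisubharmonic
(its Levi form is positive definite everywhere), then every holomorphic disc
tangent to the distribution `ker ∂ρ` is constant. -/
theorem holomorphic_disc_tangent_ker_dbar_rho_const {k : ℕ} (hk : 1 ≤ k)
    (ρ : Ck k → ℝ) (hρ : ContDiff ℝ 2 ρ)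
    (hstrict : ∀ z ξ : Ck k, ξ ≠ 0 → 0 < Levi ρ z ξ)
    (φ : ℂ → Ck k) (hφ : DifferentiableOn ℂ φ (ball (0 : ℂ) 1))
    (htangent : ∀ ζ ∈ ball (0 : ℂ) 1,
      fderiv ℝ ρ (φ ζ) (deriv φ ζ) = 0 ∧
      fderiv ℝ ρ (φ ζ) ((Complex.I : ℂ) • deriv φ ζ) = 0) :
    ∀ ζ ∈ ball (0 : ℂ) 1, ∀ ζ' ∈ ball (0 : ℂ) 1, φ ζ = φ ζ' :=
  holomorphic_disc_tangent_ker_dbar_rho_const_general ρ hρ hstrict φ hφ htangent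
end
end
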